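/- Consider the ODE $\partial_t (a_t, b_t) = \overline{F}(a_t, b_t)$ on $\mathbb{R}^2$ where $\overline{F}(a,b) = \left( \int \cos \, d\overline{\pi}(a,b) - a, \int \sin \, d\overline{\pi}(a,b) - b \right)$ and $\overline{\pi}(a,b)(dz) \propto e^{-U(z) + \rho(a\cos z + b \sin z)} dz$ on $\mathbb{T}$, with $U$ continuous satisfying $\int \cos \, dm_U = \int \sin \, dm_U = 0$ for $m_U \propto e^{-U}$. Then $(0,0)$ is an equilibrium of $\overline{F}$ and the Jacobian of $\overline{F}$ at $(0,0)$ equals $\rho M_U - I$, where $M_U = \begin{pmatrix} \int \cos^2 dm_U & \int \cos\sin\, dm_U \\ \int \cos\sin\, dm_U & \int \sin^2 dm_U \end{pmatrix}$. -/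

import Mathlib

/-!
Write `F̄ = (N_cos / N_1 - a, N_sin / N_1 - b)` with `N_f(a,b) = ∫ f e^{-U + ρ(a cos + b sin)}`.
Differentiating under the integral sign (the exponential factor is dominated uniformly near any
point, since `U` is continuous on a compact period) gives `∇N_f = ρ (N_{cos f}, N_{sin f})`.
At the origin `N_cos = N_sin = 0` by the vanishing first moments of `m_U`, so the quotient rule
loses its second term and `∇(N_f / N_1)(0) = ρ (∫ cos f dm_U, ∫ sin f dm_U)`.
-/

open Real MeasureTheory

theorem HasFDerivAt.div_of_apply_eq_zero {𝕜 E : Type*} [NontriviallyNormedField 𝕜]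
    [NormedAddCommGroup E] [NormedSpace 𝕜 E] {c d : E → 𝕜} {c' d' : E →L[𝕜] 𝕜} {x : E}
    (hc : HasFDerivAt c c' x) (hd : HasFDerivAt d d' x) (hdx : d x ≠ 0) (hcx : c x = 0) :
    HasFDerivAt (fun y => c y / d y) ((d x)⁻¹ • c') x := by
  have h := hc.mul ((hasDerivAt_inv hdx).comp_hasFDerivAt x hd)
  rw [show (fun y => c y / d y) = c * (fun y => y⁻¹) ∘ d from funext fun y => div_eq_mul_inv _ _]
  refine h.congr_fderiv (ContinuousLinearMap.ext fun v => ?_)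
  simp [hcx]

section LaplaceTransform

variable {α E : Type*} [MeasurableSpace α] {μ : Measure α} [NormedAddCommGroup E]
  [NormedSpace ℝ E]

theorem ContinuousLinearMap.apply_le_of_norm_le_of_mem_ball {L : E →L[ℝ] ℝ} {C : ℝ}
    (hL : ‖L‖ ≤ C) {p q : E} (hq : q ∈ Metric.ball p 1) : L q ≤ C * (‖p‖ + 1) := by
  have hC : 0 ≤ C := (norm_nonneg L).trans hL
  have hqp : ‖q‖ ≤ ‖p‖ + 1 := by
    linarith [norm_le_norm_add_norm_sub' q p, (dist_eq_norm q p).symm ▸ (Metric.mem_ball.1 hq).le]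
  calc L q ≤ ‖L q‖ := le_norm_self _
    _ ≤ ‖L‖ * ‖q‖ := L.le_opNorm q
    _ ≤ C * (‖p‖ + 1) := by gcongr

theorem hasFDerivAt_integral_mul_exp_apply {g : α → ℝ} (hg : Integrable g μ)
    {φ : α → E →L[ℝ] ℝ} (hφ : AEStronglyMeasurable φ μ) {C : ℝ} (hφC : ∀ᵐ z ∂μ, ‖φ z‖ ≤ C)
    (p : E) :
    HasFDerivAt (fun q => ∫ z, g z * exp (φ z q) ∂μ)
      (∫ z, (g z * exp (φ z p)) • φ z ∂μ) p := by
  have hmeas (q : E) : AEStronglyMeasurable (fun z => g z * exp (φ z q)) μ :=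
    hg.aestronglyMeasurable.mul
      (continuous_exp.comp_aestronglyMeasurable (hφ.apply_continuousLinearMap q))
  refine hasFDerivAt_integral_of_dominated_of_fderiv_le (Metric.ball_mem_nhds p one_pos)
    (F' := fun q z => (g z * exp (φ z q)) • φ z)
    (bound := fun z => |g z| * exp (C * (‖p‖ + 1)) * C) (.of_forall hmeas) ?_
    ((hmeas p).smul hφ) ?_ ((hg.abs.mul_const _).mul_const _) ?_
  · refine (hg.abs.mul_const (exp (C * (‖p‖ + 1)))).mono' (hmeas p) ?_
    filter_upwards [hφC] with z hz
    rw [norm_mul, norm_of_nonneg (exp_pos _).le, Real.norm_eq_abs]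
    gcongr
    exact (φ z).apply_le_of_norm_le_of_mem_ball hz (Metric.mem_ball_self one_pos)
  · filter_upwards [hφC] with z hz q hq
    rw [norm_smul, norm_mul, norm_of_nonneg (exp_pos _).le, Real.norm_eq_abs]
    gcongr
    exact (φ z).apply_le_of_norm_le_of_mem_ball hz hq
  · filter_upwards with z q _
    simpa only [smul_smul] using ((φ z).hasFDerivAt.exp).const_mul (g z)

end LaplaceTransform

/-- `tiltedIntegral U ρ f (a, b)` is `∫ f dπ̄(a,b)` times the normalising constant of `π̄(a,b)`. -/
noncomputable def tiltedIntegral (U : ℝ → ℝ) (ρ : ℝ) (f : ℝ → ℝ) (p : ℝ × ℝ) : ℝ :=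
  ∫ z in (-π)..π, f z * exp (-U z + ρ * (p.1 * cos z + p.2 * sin z))

section TiltedIntegral

open ContinuousLinearMap

theorem norm_smul_fst_add_smul_snd_le {𝕜 E : Type*} [NontriviallyNormedField 𝕜]
    [NormedAddCommGroup E] [NormedSpace 𝕜 E] (a b : 𝕜) :
    ‖a • fst 𝕜 E E + b • snd 𝕜 E E‖ ≤ ‖a‖ + ‖b‖ :=
  calc ‖a • fst 𝕜 E E + b • snd 𝕜 E E‖ ≤ ‖a‖ * ‖fst 𝕜 E E‖ + ‖b‖ * ‖snd 𝕜 E E‖ := by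
        simpa only [norm_smul] using norm_add_le (a • fst 𝕜 E E) (b • snd 𝕜 E E)
    _ ≤ ‖a‖ * 1 + ‖b‖ * 1 := by gcongr; exacts [norm_fst_le 𝕜 E E, norm_snd_le 𝕜 E E]
    _ = ‖a‖ + ‖b‖ := by ring

theorem tiltedIntegral_zero (U : ℝ → ℝ) (ρ : ℝ) (f : ℝ → ℝ) :
    tiltedIntegral U ρ f (0, 0) = ∫ z in (-π)..π, f z * exp (-U z) := by
  simp [tiltedIntegral]

theorem integral_exp_neg_pos {U : ℝ → ℝ} (hU : Continuous U) :
    0 < ∫ z in (-π)..π, exp (-U z) :=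
  intervalIntegral.intervalIntegral_pos_of_pos_on
    ((by fun_prop : Continuous fun z => exp (-U z)).intervalIntegrable _ _)
    (fun z _ => exp_pos _) (neg_lt_self pi_pos)

theorem hasFDerivAt_tiltedIntegral {U f : ℝ → ℝ} (hU : Continuous U) (hf : Continuous f)
    (ρ : ℝ) (p : ℝ × ℝ) :
    HasFDerivAt (tiltedIntegral U ρ f)
      ((ρ * tiltedIntegral U ρ (fun z => cos z * f z) p) • fst ℝ ℝ ℝ
        + (ρ * tiltedIntegral U ρ (fun z => sin z * f z) p) • snd ℝ ℝ ℝ) p := by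
  set φ : ℝ → (ℝ × ℝ) →L[ℝ] ℝ := fun z => (ρ * cos z) • fst ℝ ℝ ℝ + (ρ * sin z) • snd ℝ ℝ ℝ
  have hφ : Continuous φ := by fun_prop
  have hφC (z : ℝ) : ‖φ z‖ ≤ |ρ| + |ρ| := by
    refine (norm_smul_fst_add_smul_snd_le _ _).trans ?_
    simp only [Real.norm_eq_abs, abs_mul]
    gcongr <;> apply mul_le_of_le_one_right (abs_nonneg ρ)
    exacts [abs_cos_le_one z, abs_sin_le_one z]
  have hexp (z : ℝ) (q : ℝ × ℝ) :
      exp (-U z + ρ * (q.1 * cos z + q.2 * sin z)) = exp (-U z) * exp (φ z q) := by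
    rw [← exp_add]
    congr 1
    simp only [φ, add_apply, smul_apply, coe_fst', coe_snd', smul_eq_mul]
    ring
  have hT : tiltedIntegral U ρ f =
      fun q => ∫ z in Set.Ioc (-π) π, f z * exp (-U z) * exp (φ z q) := by
    ext q
    simp only [tiltedIntegral, intervalIntegral.integral_of_le (neg_le_self pi_pos.le), hexp,
      mul_assoc]
  rw [hT]
  refine (hasFDerivAt_integral_mul_exp_apply (μ := volume.restrict (Set.Ioc (-π) π))
    (by fun_prop : Continuous fun z => f z * exp (-U z)).integrableOn_Ioc
    hφ.aestronglyMeasurable (.of_forall hφC) p).congr_fderiv ?_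
  set e : ℝ → ℝ := fun z => exp (-U z + ρ * (p.1 * cos z + p.2 * sin z))
  have he : Continuous e := by fun_prop
  have integrand (z : ℝ) : (f z * exp (-U z) * exp (φ z p)) • φ z
      = (ρ * (cos z * f z * e z)) • fst ℝ ℝ ℝ + (ρ * (sin z * f z * e z)) • snd ℝ ℝ ℝ := by
    simp only [e, hexp, φ, smul_add, smul_smul]
    congr 2 <;> ring
  simp_rw [integrand]
  rw [integral_add (by fun_prop : Continuous _).integrableOn_Ioc
      (by fun_prop : Continuous _).integrableOn_Ioc,
    integral_smul_const, integral_smul_const, integral_const_mul, integral_const_mul,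
    tiltedIntegral, tiltedIntegral, intervalIntegral.integral_of_le (neg_le_self pi_pos.le),
    intervalIntegral.integral_of_le (neg_le_self pi_pos.le)]

theorem hasFDerivAt_tiltedIntegral_div_of_integral_eq_zero {U f : ℝ → ℝ} (hU : Continuous U)
    (hf : Continuous f) (ρ : ℝ) (hf0 : ∫ z in (-π)..π, f z * exp (-U z) = 0) :
    HasFDerivAt (fun p => tiltedIntegral U ρ f p / tiltedIntegral U ρ 1 p)
      ((∫ z in (-π)..π, exp (-U z))⁻¹ •
        ((ρ * ∫ z in (-π)..π, cos z * f z * exp (-U z)) • fst ℝ ℝ ℝ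
          + (ρ * ∫ z in (-π)..π, sin z * f z * exp (-U z)) • snd ℝ ℝ ℝ)) (0, 0) := by
  have hZ : tiltedIntegral U ρ 1 (0, 0) = ∫ z in (-π)..π, exp (-U z) := by
    simp [tiltedIntegral_zero]
  simpa only [hZ, tiltedIntegral_zero] using
    (hasFDerivAt_tiltedIntegral hU hf ρ (0, 0)).div_of_apply_eq_zero
      (hasFDerivAt_tiltedIntegral hU continuous_one ρ (0, 0)) (hZ ▸ (integral_exp_neg_pos hU).ne')
      (by rwa [tiltedIntegral_zero])

end TiltedIntegral

theorem stmt18_general (U : ℝ → ℝ) (hU : Continuous U) (ρ : ℝ)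
    (hcos : (∫ z in (-π)..π, cos z * exp (-U z)) = 0)
    (hsin : (∫ z in (-π)..π, sin z * exp (-U z)) = 0)
    (m11 m12 m22 : ℝ)
    (hm11 : m11 = (∫ z in (-π)..π, cos z ^ 2 * exp (-U z)) / ∫ z in (-π)..π, exp (-U z))
    (hm12 : m12 = (∫ z in (-π)..π, cos z * sin z * exp (-U z)) / ∫ z in (-π)..π, exp (-U z))
    (hm22 : m22 = (∫ z in (-π)..π, sin z ^ 2 * exp (-U z)) / ∫ z in (-π)..π, exp (-U z))
    (Fbar : ℝ × ℝ → ℝ × ℝ)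
    (hF : ∀ p : ℝ × ℝ, Fbar p =
      ((∫ z in (-π)..π, cos z * exp (-U z + ρ * (p.1 * cos z + p.2 * sin z))) /
          (∫ z in (-π)..π, exp (-U z + ρ * (p.1 * cos z + p.2 * sin z))) - p.1,
       (∫ z in (-π)..π, sin z * exp (-U z + ρ * (p.1 * cos z + p.2 * sin z))) /
          (∫ z in (-π)..π, exp (-U z + ρ * (p.1 * cos z + p.2 * sin z))) - p.2)) :
    Fbar (0, 0) = (0, 0) ∧
    HasFDerivAt Fbar
      (((ρ * m11 - 1) • ContinuousLinearMap.fst ℝ ℝ ℝ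
          + (ρ * m12) • ContinuousLinearMap.snd ℝ ℝ ℝ).prod
        ((ρ * m12) • ContinuousLinearMap.fst ℝ ℝ ℝ
          + (ρ * m22 - 1) • ContinuousLinearMap.snd ℝ ℝ ℝ))
      (0, 0) := by
  have hFbar : Fbar = fun p => (tiltedIntegral U ρ cos p / tiltedIntegral U ρ 1 p - p.1,
      tiltedIntegral U ρ sin p / tiltedIntegral U ρ 1 p - p.2) := by
    funext p
    simp [hF, tiltedIntegral]
  refine ⟨by simp [hFbar, tiltedIntegral_zero, hcos, hsin], ?_⟩
  have hsc : ∫ z in (-π)..π, sin z * cos z * exp (-U z) =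
      ∫ z in (-π)..π, cos z * sin z * exp (-U z) := by
    simp only [mul_comm (sin _) (cos _)]
  have hZ := (integral_exp_neg_pos hU).ne'
  rw [hFbar]
  have hfirst := (hasFDerivAt_tiltedIntegral_div_of_integral_eq_zero hU continuous_cos ρ hcos).sub
    hasFDerivAt_fst
  have hsecond := (hasFDerivAt_tiltedIntegral_div_of_integral_eq_zero hU continuous_sin ρ hsin).sub
    hasFDerivAt_snd
  refine (hfirst.prodMk hsecond).congr_fderiv
    (ContinuousLinearMap.ext fun q => Prod.ext ?_ ?_) <;>
  · simp only [← sq, hsc, hm11, hm12, hm22, smul_add, ContinuousLinearMap.prod_apply, sub_apply,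
      add_apply, smul_apply, ContinuousLinearMap.coe_fst', ContinuousLinearMap.coe_snd',
      smul_eq_mul]
    field_simp
    ring

/-- For the vector field `F̄(a,b) = (∫ cos dπ̄(a,b) - a, ∫ sin dπ̄(a,b) - b)`, where
`π̄(a,b) ∝ e^{-U + ρ(a cos + b sin)}` and the first trigonometric moments of
`m_U ∝ e^{-U}` vanish, the origin is an equilibrium whose Jacobian is `ρ M_U - I`. -/
theorem stmt18 (U : ℝ → ℝ) (hU : Continuous U) (hper : Function.Periodic U (2 * π)) (ρ : ℝ)
    (hcos : (∫ z in (-π)..π, cos z * exp (-U z)) = 0)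
    (hsin : (∫ z in (-π)..π, sin z * exp (-U z)) = 0)
    (m11 m12 m22 : ℝ)
    (hm11 : m11 = (∫ z in (-π)..π, cos z ^ 2 * exp (-U z)) / ∫ z in (-π)..π, exp (-U z))
    (hm12 : m12 = (∫ z in (-π)..π, cos z * sin z * exp (-U z)) / ∫ z in (-π)..π, exp (-U z))
    (hm22 : m22 = (∫ z in (-π)..π, sin z ^ 2 * exp (-U z)) / ∫ z in (-π)..π, exp (-U z))
    (Fbar : ℝ × ℝ → ℝ × ℝ)
    (hF : ∀ p : ℝ × ℝ, Fbar p =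
      ((∫ z in (-π)..π, cos z * exp (-U z + ρ * (p.1 * cos z + p.2 * sin z))) /
          (∫ z in (-π)..π, exp (-U z + ρ * (p.1 * cos z + p.2 * sin z))) - p.1,
       (∫ z in (-π)..π, sin z * exp (-U z + ρ * (p.1 * cos z + p.2 * sin z))) /
          (∫ z in (-π)..π, exp (-U z + ρ * (p.1 * cos z + p.2 * sin z))) - p.2)) :
    Fbar (0, 0) = (0, 0) ∧
    HasFDerivAt Fbar
      (((ρ * m11 - 1) • ContinuousLinearMap.fst ℝ ℝ ℝ
          + (ρ * m12) • ContinuousLinearMap.snd ℝ ℝ ℝ).prod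
        ((ρ * m12) • ContinuousLinearMap.fst ℝ ℝ ℝ
          + (ρ * m22 - 1) • ContinuousLinearMap.snd ℝ ℝ ℝ))
      (0, 0) :=
  stmt18_general U hU ρ hcos hsin m11 m12 m22 hm11 hm12 hm22 Fbar hF
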